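/- Under the hypotheses of the ReLU integral representation lemma, if moreover |f̂(ω)|(1+‖ω‖^k) ≤ ρ for all ω with k ≥ n+3, then the representation holds with sup over (α,t) ∈ S^{n-1} × [−R,R] of |h(α,t) q(α)| bounded by 8π²ρ. -/

import Mathlib

/-!
By Fourier inversion, `f x = ∫ Re (f̂ ω e^{2πi⟪ω, x⟫}) dω`. For fixed `ω ≠ 0` the integrand is the
profile `t ↦ Re (f̂ ω e^{2πi‖ω‖t})` evaluated at `s = ⟪ω / ‖ω‖, x⟫ ∈ [-R, R]`; Taylor's formula at
`-R` with integral remainder, written against the ReLU kernel `(s - t)₊`, splits it into an affine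
function of `x` and a remainder whose kernel, the second derivative of the profile, is bounded by
the Barron weight `|f̂ ω| ‖2πω‖²`. Integrating the affine parts over `ω` gives `⟪a, x⟫ + b`; the
remainder, in polar coordinates `ω = r α` followed by Fubini in `(r, t)`, becomes
`∫∫ H(α, t) (⟪α, x⟫ - t)₊ dt dα` with `|H(α, t)| ≤ ∫ r^{n-1} |f̂ (rα)| ‖2πrα‖² dr = Z q(α)`.
Hence `H` vanishes where `q` does, so `h = H / q` satisfies `h q = H`, and the decay of `f̂` bounds `|H|` by
`4π²ρ ∫₀^∞ r^{n+1} / (1 + r^k) dr ≤ 8π²ρ`, the last integral being at most `1` on `(0, 1]` and at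
most `∫₁^∞ r⁻² dr = 1` beyond.
-/

open MeasureTheory Real RealInnerProductSpace Set Metric Module FourierTransform

theorem eq_intervalIntegral_mul_relu_add {φ φ' φ'' : ℝ → ℝ} (hφ : ∀ t, HasDerivAt φ (φ' t) t)
    (hφ' : ∀ t, HasDerivAt φ' (φ'' t) t) (hφ'' : Continuous φ'') {a b s : ℝ} (hs : s ∈ Icc a b) :
    φ s = (∫ t in a..b, φ'' t * max 0 (s - t)) + φ' a * (s - a) + φ a := by
  have hint : ∀ u v, IntervalIntegrable (fun t => φ'' t * max 0 (s - t)) volume u v := fun _ _ =>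
    (hφ''.mul (continuous_const.max (continuous_const.sub continuous_id))).intervalIntegrable _ _
  have hleft : ∫ t in a..s, φ'' t * max 0 (s - t) = φ s - φ' a * (s - a) - φ a := by
    have hrelu : ∀ t ∈ uIcc a s, φ'' t * max 0 (s - t) = φ'' t * (s - t) := fun t ht => by
      rw [uIcc_of_le hs.1] at ht
      rw [max_eq_right (sub_nonneg.2 ht.2)]
    have hprim : ∀ t ∈ uIcc a s, HasDerivAt (fun t => φ' t * (s - t) + φ t) (φ'' t * (s - t)) t :=
      fun t _ => by
        refine (((hφ' t).mul ((hasDerivAt_id t).const_sub s)).add (hφ t)).congr_deriv ?_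
        simp only [id]
        ring
    rw [intervalIntegral.integral_congr hrelu, intervalIntegral.integral_eq_sub_of_hasDerivAt hprim
      ((hφ''.mul (continuous_const.sub continuous_id)).intervalIntegrable _ _)]
    ring
  have hright : ∫ t in s..b, φ'' t * max 0 (s - t) = 0 := by
    have hrelu : ∀ t ∈ uIcc s b, φ'' t * max 0 (s - t) = 0 := fun t ht => by
      rw [uIcc_of_le hs.2] at ht
      rw [max_eq_left (sub_nonpos.2 ht.1), mul_zero]
    rw [intervalIntegral.integral_congr hrelu, intervalIntegral.integral_zero]
  rw [← intervalIntegral.integral_add_adjacent_intervals (hint a s) (hint s b), hleft, hright]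
  ring

theorem pow_div_one_add_pow_le_one (m k : ℕ) {r : ℝ} (h0 : 0 ≤ r) (h1 : r ≤ 1) :
    r ^ m / (1 + r ^ k) ≤ 1 := by
  rw [div_le_one (by positivity)]
  linarith [pow_le_one₀ h0 h1 (n := m), pow_nonneg h0 k]

theorem pow_div_one_add_pow_le_rpow_neg_two {m k : ℕ} (hk : m + 2 ≤ k) {r : ℝ} (hr : 1 ≤ r) :
    r ^ m / (1 + r ^ k) ≤ r ^ (-2 : ℝ) := by
  have hr0 : 0 < r := one_pos.trans_le hr
  rw [rpow_neg hr0.le, rpow_two, div_le_iff₀ (by positivity), inv_mul_eq_div,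
    le_div_iff₀ (by positivity), ← pow_add]
  linarith [pow_le_pow_right₀ hr hk]

theorem integrableOn_Ioc_pow_div_one_add_pow (m k : ℕ) :
    IntegrableOn (fun r : ℝ => r ^ m / (1 + r ^ k)) (Ioc 0 1) := by
  refine (ContinuousOn.integrableOn_Icc ?_).mono_set Ioc_subset_Icc_self
  exact continuousOn_of_forall_continuousAt fun r hr =>
    (continuous_pow m).continuousAt.div (by fun_prop) (by linarith [pow_nonneg hr.1 k])

theorem integrableOn_Ioi_one_pow_div_one_add_pow {m k : ℕ} (hk : m + 2 ≤ k) :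
    IntegrableOn (fun r : ℝ => r ^ m / (1 + r ^ k)) (Ioi 1) := by
  refine (integrableOn_Ioi_rpow_of_lt (by norm_num : (-2 : ℝ) < -1) one_pos).mono' ?_ ?_
  · exact (continuousOn_of_forall_continuousAt fun r (hr : 1 < r) =>
      (continuous_pow m).continuousAt.div (by fun_prop)
        (by linarith [pow_nonneg (zero_le_one.trans hr.le) k])).aestronglyMeasurable
      measurableSet_Ioi
  · filter_upwards [ae_restrict_mem measurableSet_Ioi] with r (hr : 1 < r)
    rw [norm_of_nonneg (by positivity)]
    exact pow_div_one_add_pow_le_rpow_neg_two hk hr.le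

theorem integrableOn_Ioi_pow_div_one_add_pow {m k : ℕ} (hk : m + 2 ≤ k) :
    IntegrableOn (fun r : ℝ => r ^ m / (1 + r ^ k)) (Ioi 0) := by
  rw [← Ioc_union_Ioi_eq_Ioi zero_le_one]
  exact (integrableOn_Ioc_pow_div_one_add_pow m k).union
    (integrableOn_Ioi_one_pow_div_one_add_pow hk)

theorem integral_Ioi_pow_div_one_add_pow_le_two {m k : ℕ} (hk : m + 2 ≤ k) :
    ∫ r in Ioi (0 : ℝ), r ^ m / (1 + r ^ k) ≤ 2 := by
  rw [← Ioc_union_Ioi_eq_Ioi zero_le_one, setIntegral_union (Ioc_disjoint_Ioi le_rfl)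
    measurableSet_Ioi (integrableOn_Ioc_pow_div_one_add_pow m k)
    (integrableOn_Ioi_one_pow_div_one_add_pow hk)]
  have hnear : ∫ r in Ioc (0 : ℝ) 1, r ^ m / (1 + r ^ k) ≤ 1 := by
    simpa using setIntegral_mono_on (integrableOn_Ioc_pow_div_one_add_pow m k)
      (integrableOn_const (C := (1 : ℝ)) (by simp) (by simp)) measurableSet_Ioc
      fun r hr => pow_div_one_add_pow_le_one m k hr.1.le hr.2
  have hfar : ∫ r in Ioi (1 : ℝ), r ^ m / (1 + r ^ k) ≤ 1 := by
    calc ∫ r in Ioi (1 : ℝ), r ^ m / (1 + r ^ k) ≤ ∫ r in Ioi 1, r ^ (-2 : ℝ) :=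
          setIntegral_mono_on (integrableOn_Ioi_one_pow_div_one_add_pow hk)
            (integrableOn_Ioi_rpow_of_lt (by norm_num) one_pos) measurableSet_Ioi
            fun r hr => pow_div_one_add_pow_le_rpow_neg_two hk (le_of_lt hr)
      _ = 1 := by rw [integral_Ioi_rpow_of_lt (by norm_num) one_pos]; norm_num
  linarith

section Decay

variable {E : Type*} [NormedAddCommGroup E] {γ : ℝ → E} {k m : ℕ} {ρ : ℝ}

theorem pow_mul_norm_le_of_decay (hdecay : ∀ r, 0 < r → ‖γ r‖ * (1 + r ^ k) ≤ ρ) {r : ℝ}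
    (hr : 0 < r) : ‖r ^ m * ‖γ r‖‖ ≤ ρ * (r ^ m / (1 + r ^ k)) := by
  rw [norm_of_nonneg (by positivity), mul_div_assoc', le_div_iff₀ (by positivity), mul_comm ρ,
    mul_assoc]
  exact mul_le_mul_of_nonneg_left (hdecay r hr) (by positivity)

theorem integrableOn_Ioi_pow_mul_norm_of_decay (hγ : Continuous γ)
    (hdecay : ∀ r, 0 < r → ‖γ r‖ * (1 + r ^ k) ≤ ρ) (hk : m + 2 ≤ k) :
    IntegrableOn (fun r => r ^ m * ‖γ r‖) (Ioi 0) :=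
  ((integrableOn_Ioi_pow_div_one_add_pow hk).const_mul ρ).mono' (by fun_prop)
    ((ae_restrict_mem measurableSet_Ioi).mono fun _ hr => pow_mul_norm_le_of_decay hdecay hr)

theorem integral_Ioi_pow_mul_norm_le_of_decay (hγ : Continuous γ)
    (hdecay : ∀ r, 0 < r → ‖γ r‖ * (1 + r ^ k) ≤ ρ) (hk : m + 2 ≤ k) :
    ∫ r in Ioi 0, r ^ m * ‖γ r‖ ≤ 2 * ρ := by
  have hρ : 0 ≤ ρ := (by positivity : 0 ≤ ‖γ 1‖ * (1 + 1 ^ k)).trans (hdecay 1 one_pos)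
  calc ∫ r in Ioi 0, r ^ m * ‖γ r‖ ≤ ∫ r in Ioi 0, ρ * (r ^ m / (1 + r ^ k)) :=
        setIntegral_mono_on (integrableOn_Ioi_pow_mul_norm_of_decay hγ hdecay hk)
          ((integrableOn_Ioi_pow_div_one_add_pow hk).const_mul ρ) measurableSet_Ioi
          fun r hr => (le_norm_self _).trans (pow_mul_norm_le_of_decay hdecay hr)
    _ = ρ * ∫ r in Ioi 0, r ^ m / (1 + r ^ k) := integral_const_mul _ _
    _ ≤ 2 * ρ := by
        linarith [mul_le_mul_of_nonneg_left (integral_Ioi_pow_div_one_add_pow_le_two hk) hρ]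

end Decay

section Space

variable {V F : Type*} [NormedAddCommGroup V] [NormedSpace ℝ V] [FiniteDimensional ℝ V]
  [MeasurableSpace V] [BorelSpace V] {μ : Measure V} [μ.IsAddHaarMeasure]
  [NormedAddCommGroup F]

theorem integrable_one_add_norm_mul_of_decay {g : V → F} {k : ℕ} {ρ : ℝ}
    (hg : AEStronglyMeasurable g μ) (hdecay : ∀ ω, ‖g ω‖ * (1 + ‖ω‖ ^ k) ≤ ρ)
    (hk : finrank ℝ V + 1 < k) : Integrable (fun ω => (1 + ‖ω‖) * ‖g ω‖) μ := by
  refine ((integrable_one_add_norm (μ := μ) (r := (k - 1 : ℕ))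
    (by exact_mod_cast (by omega : finrank ℝ V < k - 1))).const_mul (2 ^ (k - 1) * ρ)).mono'
    (by fun_prop) (ae_of_all _ fun ω => ?_)
  have h1 : 0 < 1 + ‖ω‖ := by positivity
  have hpow : (1 + ‖ω‖) ^ k * ‖g ω‖ ≤ 2 ^ (k - 1) * ρ := by
    calc (1 + ‖ω‖) ^ k * ‖g ω‖ ≤ 2 ^ (k - 1) * (1 ^ k + ‖ω‖ ^ k) * ‖g ω‖ :=
          mul_le_mul_of_nonneg_right (add_pow_le zero_le_one (norm_nonneg ω) k) (norm_nonneg _)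
      _ ≤ 2 ^ (k - 1) * ρ := by
          rw [one_pow, mul_assoc, mul_comm (1 + _)]
          exact mul_le_mul_of_nonneg_left (hdecay ω) (by positivity)
  rw [rpow_neg h1.le, rpow_natCast, ← div_eq_mul_inv, le_div_iff₀ (by positivity),
    norm_of_nonneg (by positivity), mul_right_comm, ← pow_succ', Nat.sub_add_cancel (by omega)]
  exact hpow

theorem integral_volumeIoiPow [NormedSpace ℝ F] (m : ℕ) (G : ℝ → F) :
    ∫ r : Ioi (0 : ℝ), G r ∂Measure.volumeIoiPow m = ∫ r in Ioi (0 : ℝ), r ^ m • G r := by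
  simp only [Measure.volumeIoiPow, ENNReal.ofReal]
  rw [integral_withDensity_eq_integral_smul (measurable_subtype_coe.pow_const _).real_toNNReal,
    integral_subtype_comap measurableSet_Ioi fun a => Real.toNNReal (a ^ m) • G a]
  refine setIntegral_congr_fun measurableSet_Ioi fun r (hr : 0 < r) => ?_
  rw [NNReal.smul_def, Real.coe_toNNReal _ (pow_nonneg hr.le _)]

theorem integral_eq_integral_toSphere_integral_Ioi [Nontrivial V] [NormedSpace ℝ F]
    [CompleteSpace F] {g : V → F} (hg : Integrable g μ) :
    ∫ x, g x ∂μ =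
      ∫ α, (∫ r in Ioi (0 : ℝ), r ^ (finrank ℝ V - 1) • g (r • (α : V))) ∂μ.toSphere := by
  set G : sphere (0 : V) 1 × Ioi (0 : ℝ) → F := fun p => g ((p.2 : ℝ) • (p.1 : V))
  have hG : G ∘ homeomorphUnitSphereProd V = fun x : ({0}ᶜ : Set V) => g x := funext fun x => by
    simp [G, smul_inv_smul₀ (norm_ne_zero_iff.2 x.2)]
  have hmp := μ.measurePreserving_homeomorphUnitSphereProd
  have hemb := (homeomorphUnitSphereProd V).measurableEmbedding
  have hcompl : MeasurableSet ({0}ᶜ : Set V) := (measurableSet_singleton 0).compl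
  have hGi : Integrable G (μ.toSphere.prod (Measure.volumeIoiPow (finrank ℝ V - 1))) := by
    rw [← hmp.integrable_comp_emb hemb, hG]
    exact (MeasurableEmbedding.subtype_coe hcompl).integrable_map_iff.1
      (by rw [map_comap_subtype_coe hcompl]; exact hg.integrableOn)
  calc ∫ x, g x ∂μ = ∫ x : ({0}ᶜ : Set V), g x ∂μ.comap Subtype.val := by
        rw [integral_subtype_comap hcompl, restrict_compl_singleton]
    _ = ∫ p, G p ∂μ.toSphere.prod (Measure.volumeIoiPow (finrank ℝ V - 1)) := by
        rw [← hmp.integral_comp hemb G, ← hG]; rfl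
    _ = _ := by
        rw [integral_prod _ hGi]
        exact integral_congr_ae (ae_of_all _ fun α =>
          integral_volumeIoiPow _ fun r => g (r • (α : V)))

end Space

theorem integral_Ioi_intervalIntegral_mul_swap {F : ℝ → ℝ → ℝ} {B w : ℝ → ℝ} {a b : ℝ}
    (hF : Continuous (Function.uncurry F)) (hw : Continuous w) (hB : IntegrableOn B (Ioi 0))
    (hFB : ∀ r, 0 < r → ∀ t, |F r t| ≤ B r) :
    ∫ r in Ioi 0, ∫ t in a..b, F r t * w t = ∫ t in a..b, (∫ r in Ioi 0, F r t) * w t := by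
  obtain ⟨C, hC⟩ := (isCompact_uIcc (a := a) (b := b)).exists_bound_of_continuousOn hw.continuousOn
  have : IsFiniteMeasure (volume.restrict (uIoc a b)) := isFiniteMeasure_restrict.2 (by simp)
  have hint : Integrable (Function.uncurry fun t r => F r t * w t)
      ((volume.restrict (uIoc a b)).prod (volume.restrict (Ioi 0))) := by
    refine ((integrable_const C).mul_prod hB).mono' (by fun_prop) ?_
    rw [Measure.prod_restrict]
    filter_upwards [ae_restrict_mem (measurableSet_uIoc.prod measurableSet_Ioi)]
      with ⟨t, r⟩ ⟨ht, hr⟩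
    rw [Function.uncurry_apply_pair, norm_mul, mul_comm C]
    exact mul_le_mul (hFB r hr t) (hC t (uIoc_subset_uIcc ht)) (norm_nonneg _)
      ((abs_nonneg _).trans (hFB r hr t))
  rw [← intervalIntegral_integral_swap hint]
  exact intervalIntegral.integral_congr fun t _ => integral_mul_const _ _

theorem eq_integral_re_fourierChar_smul_fourier {V : Type*} [NormedAddCommGroup V]
    [InnerProductSpace ℝ V] [FiniteDimensional ℝ V] [MeasurableSpace V] [BorelSpace V]
    {f : V → ℝ} (hf : Continuous f) (hfi : Integrable f) (hFi : Integrable (𝓕 fun y => (f y : ℂ)))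
    (x : V) : f x = ∫ ω, (𝐞 ⟪ω, x⟫ • 𝓕 (fun y => (f y : ℂ)) ω).re := by
  have hfc : Continuous fun y => (f y : ℂ) := by fun_prop
  have hinv := congrFun (hfc.fourierInv_fourier_eq hfi.ofReal hFi) x
  rw [Real.fourierInv_eq] at hinv
  have hint := (Real.fourierIntegral_convergent_iff (-x)).2 hFi
  simp only [inner_neg_right, neg_neg] at hint
  rw [← Complex.ofReal_re (f x), ← hinv]
  exact (integral_re hint).symm

noncomputable def ridgeWave (c : ℂ) (r t : ℝ) : ℂ := c * Complex.exp (↑(2 * π * r * t) * Complex.I)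

theorem norm_ridgeWave (c : ℂ) (r t : ℝ) : ‖ridgeWave c r t‖ = ‖c‖ := by
  rw [ridgeWave, norm_mul, Complex.norm_exp_ofReal_mul_I, mul_one]

theorem abs_re_ridgeWave_le (c : ℂ) (r t : ℝ) : |(ridgeWave c r t).re| ≤ ‖c‖ :=
  (Complex.abs_re_le_norm _).trans (norm_ridgeWave c r t).le

@[fun_prop]
theorem Continuous.ridgeWave {X : Type*} [TopologicalSpace X] {c : X → ℂ} {r t : X → ℝ}
    (hc : Continuous c) (hr : Continuous r) (ht : Continuous t) :
    Continuous fun x => _root_.ridgeWave (c x) (r x) (t x) := by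
  unfold _root_.ridgeWave
  fun_prop

theorem hasDerivAt_re_ridgeWave (c : ℂ) (r t : ℝ) :
    HasDerivAt (fun t => (ridgeWave c r t).re)
      (ridgeWave (2 * π * r * Complex.I * c) r t).re t := by
  have hlin : HasDerivAt (fun t : ℝ => (↑(2 * π * r * t) * Complex.I : ℂ))
      (2 * π * r * Complex.I) t := by
    simpa using ((hasDerivAt_id t).ofReal_comp.const_mul (2 * π * r : ℂ)).mul_const Complex.I
  refine (Complex.reCLM.hasFDerivAt.comp_hasDerivAt t (hlin.cexp.const_mul c)).congr_deriv ?_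
  simp only [ridgeWave, Complex.reCLM_apply]
  ring_nf

theorem re_ridgeWave_eq_intervalIntegral_mul_relu_add (c : ℂ) (r : ℝ) {a b s : ℝ}
    (hs : s ∈ Icc a b) :
    (ridgeWave c r s).re =
      (∫ t in a..b, -(2 * π * r) ^ 2 * (ridgeWave c r t).re * max 0 (s - t))
        + (ridgeWave (2 * π * r * Complex.I * c) r a).re * (s - a) + (ridgeWave c r a).re := by
  refine eq_intervalIntegral_mul_relu_add (hasDerivAt_re_ridgeWave c r)
    (fun t => (hasDerivAt_re_ridgeWave _ r t).congr_deriv ?_) (by fun_prop) hs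
  have hI : (2 * π * r * Complex.I) * (2 * π * r * Complex.I) = ((-(2 * π * r) ^ 2 : ℝ) : ℂ) := by
    push_cast
    linear_combination (2 * π * r : ℂ) ^ 2 * Complex.I_sq
  simp only [ridgeWave]
  rw [← mul_assoc, hI, mul_assoc, Complex.re_ofReal_mul]

section Ridge

variable {V : Type*} [NormedAddCommGroup V] (g : V → ℂ) (R : ℝ)

noncomputable def ridgeCurvature (ω : V) (t : ℝ) : ℝ :=
  -(2 * π * ‖ω‖) ^ 2 * (ridgeWave (g ω) ‖ω‖ t).re

noncomputable def ridgeSlope (ω : V) : ℝ :=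
  (ridgeWave (2 * π * Complex.I * g ω) ‖ω‖ (-R)).re

noncomputable def ridgeOffset (ω : V) : ℝ :=
  (ridgeWave (g ω) ‖ω‖ (-R)).re + R * (‖ω‖ * ridgeSlope g R ω)

noncomputable def ridgeRemainder [InnerProductSpace ℝ V] (x ω : V) : ℝ :=
  ∫ t in (-R)..R, ridgeCurvature g ω t * max 0 (⟪‖ω‖⁻¹ • ω, x⟫ - t)

/-- `ridgeDensity g α t` is the product `h(α, t) q(α)` of the representation. -/
noncomputable def ridgeDensity [NormedSpace ℝ V] (α : V) (t : ℝ) : ℝ :=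
  ∫ r in Ioi 0, r ^ (finrank ℝ V - 1) * ridgeCurvature g (r • α) t

noncomputable def barronWeight [NormedSpace ℝ V] (ω : V) : ℝ := ‖g ω‖ * ‖(2 * π) • ω‖ ^ 2

theorem abs_ridgeCurvature_le [NormedSpace ℝ V] (ω : V) (t : ℝ) :
    |ridgeCurvature g ω t| ≤ barronWeight g ω := by
  rw [ridgeCurvature, barronWeight, abs_mul, abs_neg, abs_of_nonneg (by positivity), norm_smul,
    norm_of_nonneg (by positivity : (0 : ℝ) ≤ 2 * π), mul_pow, mul_comm ‖g ω‖]
  exact mul_le_mul_of_nonneg_left (abs_re_ridgeWave_le _ _ _) (by positivity)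

theorem abs_ridgeSlope_le (ω : V) : |ridgeSlope g R ω| ≤ 2 * π * ‖g ω‖ := by
  refine (abs_re_ridgeWave_le _ _ _).trans_eq ?_
  rw [norm_mul, norm_mul, Complex.norm_I, mul_one, Complex.norm_mul, Complex.norm_ofNat,
    Complex.norm_real, norm_of_nonneg pi_pos.le]

theorem abs_ridgeOffset_le (ω : V) :
    |ridgeOffset g R ω| ≤ (1 + 2 * π * |R|) * ((1 + ‖ω‖) * ‖g ω‖) := by
  have h1 := abs_re_ridgeWave_le (g ω) ‖ω‖ (-R)
  have h2 : |R * (‖ω‖ * ridgeSlope g R ω)| ≤ |R| * (‖ω‖ * (2 * π * ‖g ω‖)) := by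
    rw [abs_mul, abs_mul, abs_norm]
    gcongr
    exact abs_ridgeSlope_le g R ω
  refine (abs_add_le _ _).trans ?_
  nlinarith [mul_nonneg (norm_nonneg ω) (norm_nonneg (g ω)),
    mul_nonneg (mul_nonneg pi_pos.le (abs_nonneg R)) (norm_nonneg (g ω))]

theorem continuous_ridgeCurvature (hg : Continuous g) :
    Continuous fun p : V × ℝ => ridgeCurvature g p.1 p.2 := by
  unfold ridgeCurvature
  fun_prop

theorem continuous_ridgeSlope (hg : Continuous g) : Continuous (ridgeSlope g R) := by
  unfold ridgeSlope
  fun_prop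

theorem continuous_ridgeOffset (hg : Continuous g) : Continuous (ridgeOffset g R) := by
  have := continuous_ridgeSlope g R hg
  unfold ridgeOffset
  fun_prop

theorem re_fourierChar_smul_eq [InnerProductSpace ℝ V] {x : V} (hx : ‖x‖ ≤ R) (ω : V) :
    (𝐞 ⟪ω, x⟫ • g ω).re =
      ridgeRemainder g R x ω + ⟪ridgeSlope g R ω • ω, x⟫ + ridgeOffset g R ω := by
  have hωx : ⟪ω, x⟫ = ‖ω‖ * ⟪‖ω‖⁻¹ • ω, x⟫ := by
    rcases eq_or_ne ω 0 with rfl | hω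
    · simp
    · rw [real_inner_smul_left, ← mul_assoc, mul_inv_cancel₀ (norm_ne_zero_iff.2 hω), one_mul]
  have hs : ⟪‖ω‖⁻¹ • ω, x⟫ ∈ Icc (-R) R := by
    have hdir : ‖‖ω‖⁻¹ • ω‖ ≤ 1 := by
      rcases eq_or_ne ω 0 with rfl | hω
      · simp
      · rw [norm_smul, norm_inv, norm_norm, inv_mul_cancel₀ (norm_ne_zero_iff.2 hω)]
    refine abs_le.1 ((abs_real_inner_le_norm _ _).trans ?_)
    nlinarith [norm_nonneg x, norm_nonneg (‖ω‖⁻¹ • ω)]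
  have hwave : 𝐞 ⟪ω, x⟫ • g ω = ridgeWave (g ω) ‖ω‖ ⟪‖ω‖⁻¹ • ω, x⟫ := by
    rw [Circle.smul_def, Real.fourierChar_apply, hωx, ridgeWave, smul_eq_mul, mul_comm]
    push_cast
    ring_nf
  have hslope :
      (ridgeWave (2 * π * ‖ω‖ * Complex.I * g ω) ‖ω‖ (-R)).re = ‖ω‖ * ridgeSlope g R ω := by
    rw [ridgeSlope, ← Complex.re_ofReal_mul, ridgeWave, ridgeWave]
    ring_nf
  have hlin : ⟪ridgeSlope g R ω • ω, x⟫ = ridgeSlope g R ω * (‖ω‖ * ⟪‖ω‖⁻¹ • ω, x⟫) := by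
    rw [real_inner_smul_left, ← hωx]
  rw [hwave, re_ridgeWave_eq_intervalIntegral_mul_relu_add _ _ hs, ridgeOffset, hslope, hlin]
  simp only [ridgeRemainder, ridgeCurvature]
  ring

section Integrable

variable [MeasurableSpace V] [BorelSpace V] {μ : Measure V} {g} (hg : Continuous g)
  (hD : Integrable (fun ω => (1 + ‖ω‖) * ‖g ω‖) μ)
include hg hD

theorem integrable_of_integrable_one_add_norm_mul : Integrable g μ :=
  hD.mono' hg.aestronglyMeasurable (ae_of_all _ fun ω =>
    le_mul_of_one_le_left (norm_nonneg _) (le_add_of_nonneg_right (norm_nonneg ω)))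

theorem integrable_ridgeOffset : Integrable (ridgeOffset g R) μ :=
  (hD.const_mul _).mono' (continuous_ridgeOffset g R hg).aestronglyMeasurable
    (ae_of_all _ fun ω => abs_ridgeOffset_le g R ω)

theorem integrable_ridgeSlope_smul [NormedSpace ℝ V] [FiniteDimensional ℝ V] :
    Integrable (fun ω => ridgeSlope g R ω • ω) μ := by
  refine (hD.const_mul (2 * π)).mono'
    ((continuous_ridgeSlope g R hg).smul continuous_id).aestronglyMeasurable
    (ae_of_all _ fun ω => ?_)
  rw [norm_smul, norm_eq_abs]
  nlinarith [abs_ridgeSlope_le g R ω, norm_nonneg ω, norm_nonneg (g ω),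
    abs_nonneg (ridgeSlope g R ω), pi_pos]

theorem integrable_re_fourierChar_smul [InnerProductSpace ℝ V] (x : V) :
    Integrable (fun ω => (𝐞 ⟪ω, x⟫ • g ω).re) μ := by
  have := (Real.fourierIntegral_convergent_iff (μ := μ) (-x)).2
    (integrable_of_integrable_one_add_norm_mul hg hD)
  simpa using this.re

variable [InnerProductSpace ℝ V] [FiniteDimensional ℝ V]

theorem integrable_ridgeRemainder {x : V} (hx : ‖x‖ ≤ R) : Integrable (ridgeRemainder g R x) μ := by
  refine (((integrable_re_fourierChar_smul hg hD x).sub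
    ((integrable_ridgeSlope_smul R hg hD).inner_const x)).sub
      (integrable_ridgeOffset R hg hD)).congr (ae_of_all _ fun ω => ?_)
  change (𝐞 ⟪ω, x⟫ • g ω).re - ⟪ridgeSlope g R ω • ω, x⟫ - ridgeOffset g R ω = _
  rw [re_fourierChar_smul_eq g R hx ω]
  ring

theorem integral_re_fourierChar_smul_eq {x : V} (hx : ‖x‖ ≤ R) :
    ∫ ω, (𝐞 ⟪ω, x⟫ • g ω).re ∂μ = ∫ ω, ridgeRemainder g R x ω ∂μ
      + ⟪∫ ω, ridgeSlope g R ω • ω ∂μ, x⟫ + ∫ ω, ridgeOffset g R ω ∂μ := by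
  have hslope := integrable_ridgeSlope_smul R hg hD
  have hlin : ∫ ω, ⟪ridgeSlope g R ω • ω, x⟫ ∂μ = ⟪∫ ω, ridgeSlope g R ω • ω ∂μ, x⟫ := by
    simp_rw [real_inner_comm x]
    exact integral_inner hslope x
  rw [integral_congr_ae (ae_of_all _ (re_fourierChar_smul_eq g R hx)), integral_add, integral_add,
    hlin]
  exacts [integrable_ridgeRemainder R hg hD hx, hslope.inner_const x,
    (integrable_ridgeRemainder R hg hD hx).add (hslope.inner_const x),
    integrable_ridgeOffset R hg hD]

end Integrable

section Radial

variable [NormedSpace ℝ V] {α : V}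

theorem norm_mul_one_add_pow_le_of_norm_eq_one {k : ℕ} {ρ : ℝ}
    (hdecay : ∀ ω, ‖g ω‖ * (1 + ‖ω‖ ^ k) ≤ ρ) (hα : ‖α‖ = 1) {r : ℝ} (hr : 0 < r) :
    ‖g (r • α)‖ * (1 + r ^ k) ≤ ρ := by
  simpa [norm_smul, hα, abs_of_pos hr] using hdecay (r • α)

theorem pow_mul_barronWeight_smul (hα : ‖α‖ = 1) {d : ℕ} (hd : 1 ≤ d) {r : ℝ} (hr : 0 ≤ r) :
    r ^ (d - 1) * barronWeight g (r • α) = (2 * π) ^ 2 * (r ^ (d + 1) * ‖g (r • α)‖) := by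
  rw [barronWeight, norm_smul, norm_smul, hα, mul_one, norm_of_nonneg hr,
    norm_of_nonneg (by positivity : (0 : ℝ) ≤ 2 * π), show d + 1 = d - 1 + 2 by omega, pow_add]
  ring

theorem integrableOn_Ioi_pow_mul_barronWeight_smul (hg : Continuous g) {k d : ℕ} {ρ : ℝ}
    (hdecay : ∀ ω, ‖g ω‖ * (1 + ‖ω‖ ^ k) ≤ ρ) (hα : ‖α‖ = 1) (hd : 1 ≤ d) (hk : d + 3 ≤ k) :
    IntegrableOn (fun r => r ^ (d - 1) * barronWeight g (r • α)) (Ioi 0) :=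
  IntegrableOn.congr_fun ((integrableOn_Ioi_pow_mul_norm_of_decay (γ := fun r => g (r • α))
    (by fun_prop) (fun _ hr => norm_mul_one_add_pow_le_of_norm_eq_one g hdecay hα hr)
      (by omega)).const_mul ((2 * π) ^ 2))
    (fun r hr => (pow_mul_barronWeight_smul g hα hd (le_of_lt hr)).symm) measurableSet_Ioi

theorem integral_Ioi_pow_mul_barronWeight_smul_le (hg : Continuous g) {k d : ℕ} {ρ : ℝ}
    (hdecay : ∀ ω, ‖g ω‖ * (1 + ‖ω‖ ^ k) ≤ ρ) (hα : ‖α‖ = 1) (hd : 1 ≤ d) (hk : d + 3 ≤ k) :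
    ∫ r in Ioi 0, r ^ (d - 1) * barronWeight g (r • α) ≤ 8 * π ^ 2 * ρ := by
  rw [setIntegral_congr_fun measurableSet_Ioi
    (fun r hr => pow_mul_barronWeight_smul g hα hd (le_of_lt hr)), integral_const_mul]
  have := integral_Ioi_pow_mul_norm_le_of_decay (γ := fun r => g (r • α)) (m := d + 1)
    (by fun_prop) (fun _ hr => norm_mul_one_add_pow_le_of_norm_eq_one g hdecay hα hr) (by omega)
  nlinarith [pi_pos]

theorem abs_pow_mul_ridgeCurvature_le (m : ℕ) {r : ℝ} (hr : 0 ≤ r) (ω : V) (t : ℝ) :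
    |r ^ m * ridgeCurvature g ω t| ≤ r ^ m * barronWeight g ω := by
  rw [abs_mul, abs_of_nonneg (pow_nonneg hr m)]
  exact mul_le_mul_of_nonneg_left (abs_ridgeCurvature_le g ω t) (pow_nonneg hr m)

variable (hW : IntegrableOn (fun r => r ^ (finrank ℝ V - 1) * barronWeight g (r • α)) (Ioi 0))
include hW

theorem abs_ridgeDensity_le (t : ℝ) :
    |ridgeDensity g α t| ≤ ∫ r in Ioi 0, r ^ (finrank ℝ V - 1) * barronWeight g (r • α) := by
  rw [ridgeDensity, ← norm_eq_abs]
  exact norm_integral_le_of_norm_le hW ((ae_restrict_mem measurableSet_Ioi).mono fun r hr =>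
    abs_pow_mul_ridgeCurvature_le g _ (le_of_lt hr) _ t)

end Radial

theorem integral_Ioi_pow_mul_ridgeRemainder_smul [InnerProductSpace ℝ V] (hg : Continuous g)
    {α : V} (hα : ‖α‖ = 1)
    (hW : IntegrableOn (fun r => r ^ (finrank ℝ V - 1) * barronWeight g (r • α)) (Ioi 0)) (x : V) :
    ∫ r in Ioi 0, r ^ (finrank ℝ V - 1) * ridgeRemainder g R x (r • α) =
      ∫ t in (-R)..R, ridgeDensity g α t * max 0 (⟪α, x⟫ - t) := by
  have hdir : ∀ r : ℝ, 0 < r → r ^ (finrank ℝ V - 1) * ridgeRemainder g R x (r • α) =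
      ∫ t in (-R)..R, r ^ (finrank ℝ V - 1) * ridgeCurvature g (r • α) t * max 0 (⟪α, x⟫ - t) :=
    fun r hr => by
      simp_rw [ridgeRemainder, norm_smul, hα, mul_one, norm_of_nonneg hr.le, inv_smul_smul₀ hr.ne',
        mul_assoc, intervalIntegral.integral_const_mul]
  rw [setIntegral_congr_fun measurableSet_Ioi hdir]
  exact integral_Ioi_intervalIntegral_mul_swap
    (F := fun r t => r ^ (finrank ℝ V - 1) * ridgeCurvature g (r • α) t)
    (((continuous_pow _).comp continuous_fst).mul ((continuous_ridgeCurvature g hg).comp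
      ((continuous_fst.smul continuous_const).prodMk continuous_snd)))
    (by fun_prop) hW fun r hr t => abs_pow_mul_ridgeCurvature_le g _ hr.le _ t

end Ridge

theorem continuous_fourier_of_integrable {V : Type*} [NormedAddCommGroup V]
    [InnerProductSpace ℝ V] [FiniteDimensional ℝ V] [MeasurableSpace V] [BorelSpace V]
    {f : V → ℂ} (hf : Integrable f) : Continuous (𝓕 f) :=
  VectorFourier.fourierIntegral_continuous Real.continuous_fourierChar (innerSL ℝ).continuous₂ hf

theorem eq_integral_ridgeDensity_mul_relu_add {V : Type*} [NormedAddCommGroup V]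
    [InnerProductSpace ℝ V] [FiniteDimensional ℝ V] [Nontrivial V] [MeasurableSpace V]
    [BorelSpace V] {f : V → ℝ} (hf : Continuous f) (hfi : Integrable f) {k : ℕ} {ρ : ℝ}
    (hdecay : ∀ ω, ‖𝓕 (fun y => (f y : ℂ)) ω‖ * (1 + ‖ω‖ ^ k) ≤ ρ) (hk : finrank ℝ V + 3 ≤ k)
    {R : ℝ} {x : V} (hx : ‖x‖ ≤ R) :
    f x = (∫ α, (∫ t in (-R)..R, ridgeDensity (𝓕 fun y => (f y : ℂ)) (α : V) t
              * max 0 (⟪(α : V), x⟫ - t)) ∂(volume : Measure V).toSphere)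
      + ⟪∫ ω, ridgeSlope (𝓕 fun y => (f y : ℂ)) R ω • ω, x⟫
      + ∫ ω, ridgeOffset (𝓕 fun y => (f y : ℂ)) R ω := by
  have hg := continuous_fourier_of_integrable hfi.ofReal
  have hD := integrable_one_add_norm_mul_of_decay (μ := volume) hg.aestronglyMeasurable hdecay
    (by omega)
  rw [eq_integral_re_fourierChar_smul_fourier hf hfi
      (integrable_of_integrable_one_add_norm_mul hg hD) x]
  refine (integral_re_fourierChar_smul_eq R hg hD hx).trans ?_
  rw [integral_eq_integral_toSphere_integral_Ioi (integrable_ridgeRemainder R hg hD hx)]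
  congr 2
  refine integral_congr_ae (ae_of_all _ fun α => ?_)
  simp only [smul_eq_mul]
  have hα := norm_eq_of_mem_sphere α
  exact integral_Ioi_pow_mul_ridgeRemainder_smul _ R hg hα
    (integrableOn_Ioi_pow_mul_barronWeight_smul _ hg hdecay hα finrank_pos hk) x

theorem relu_integral_representation_smooth_general
    (n k : ℕ) (hn : 1 ≤ n) (hk : n + 3 ≤ k) (ρ : ℝ)
    (R : ℝ)
    (f : EuclideanSpace ℝ (Fin n) → ℝ) (hcont : Continuous f) (hfint : Integrable f)
    (fhat : EuclideanSpace ℝ (Fin n) → ℂ)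
    (hfhat : fhat = FourierTransform.fourier (fun x => (f x : ℂ)))
    (hsmooth : ∀ ω, ‖fhat ω‖ * (1 + ‖ω‖ ^ k) ≤ ρ)
    (Z : ℝ) (hZpos : 0 < Z)
    (p : EuclideanSpace ℝ (Fin n) → ℝ) (hp : p = fun ω => ‖fhat ω‖ * ‖(2 * π) • ω‖ ^ 2 / Z)
    (q : Metric.sphere (0 : EuclideanSpace ℝ (Fin n)) 1 → ℝ)
    (hq : q = fun α => ∫ r in Set.Ioi (0:ℝ), p (r • Subtype.val α) * r ^ (n - 1)) :
    ∃ (h : Metric.sphere (0 : EuclideanSpace ℝ (Fin n)) 1 → ℝ → ℝ)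
      (a : EuclideanSpace ℝ (Fin n)) (b : ℝ),
      (∀ α t, t ∈ Set.Icc (-R) R → |h α t * q α| ≤ 8 * π ^ 2 * ρ) ∧
      ∀ x : EuclideanSpace ℝ (Fin n), ‖x‖ ≤ R →
        f x = (∫ α, (∫ t in (-R)..R,
                h α t * max 0 (⟪(α : EuclideanSpace ℝ (Fin n)), x⟫ - t)) * q α
              ∂(volume : Measure (EuclideanSpace ℝ (Fin n))).toSphere)
            + ⟪a, x⟫ + b := by
  have hdim : finrank ℝ (EuclideanSpace ℝ (Fin n)) = n := finrank_euclideanSpace_fin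
  have : Nontrivial (EuclideanSpace ℝ (Fin n)) :=
    Module.nontrivial_of_finrank_pos (R := ℝ) (by omega)
  have hk' : finrank ℝ (EuclideanSpace ℝ (Fin n)) + 3 ≤ k := by omega
  have hg : Continuous fhat := hfhat ▸ continuous_fourier_of_integrable hfint.ofReal
  have hW (α : sphere (0 : EuclideanSpace ℝ (Fin n)) 1) := integrableOn_Ioi_pow_mul_barronWeight_smul
    fhat hg hsmooth (norm_eq_of_mem_sphere α) finrank_pos hk'
  have hWq (α : sphere (0 : EuclideanSpace ℝ (Fin n)) 1) :
      ∫ r in Ioi 0, r ^ (finrank ℝ (EuclideanSpace ℝ (Fin n)) - 1) * barronWeight fhat (r • (α : _))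
        = Z * q α := by
    rw [hdim, hq, hp, ← integral_const_mul]
    refine setIntegral_congr_fun measurableSet_Ioi fun r _ => ?_
    simp only [barronWeight]
    field_simp
  have hdensity (α : sphere (0 : EuclideanSpace ℝ (Fin n)) 1) (t : ℝ) :
      ridgeDensity fhat α t / q α * q α = ridgeDensity fhat α t :=
    div_mul_cancel_of_imp fun hq0 => abs_nonpos_iff.1
      ((abs_ridgeDensity_le fhat (hW α) t).trans_eq (by rw [hWq, hq0, mul_zero]))
  refine ⟨fun α t => ridgeDensity fhat α t / q α, ∫ ω, ridgeSlope fhat R ω • ω,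
    ∫ ω, ridgeOffset fhat R ω, fun α t _ => ?_, fun x hx => ?_⟩
  · rw [hdensity]
    exact (abs_ridgeDensity_le fhat (hW α) t).trans (integral_Ioi_pow_mul_barronWeight_smul_le
      fhat hg hsmooth (norm_eq_of_mem_sphere α) finrank_pos hk')
  · rw [eq_integral_ridgeDensity_mul_relu_add hcont hfint (hfhat ▸ hsmooth) hk' hx, ← hfhat]
    congr 3 with α
    rw [← intervalIntegral.integral_mul_const]
    exact intervalIntegral.integral_congr fun t _ => by
      simp only [mul_right_comm _ _ (q α), hdensity]

/-- Corollary: under the Fourier-decay smoothness condition `|f̂(ω)|(1+‖ω‖^k) ≤ ρ`, `k ≥ n+3`,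
the ReLU integral representation holds with `sup_{(α,t) ∈ S^{n-1}×[−R,R]} |h(α,t) q(α)| ≤ 8π²ρ`. -/
theorem relu_integral_representation_smooth
    (n k : ℕ) (hn : 1 ≤ n) (hk : n + 3 ≤ k) (ρ : ℝ) (hρ : 0 < ρ)
    (R : ℝ) (hR : 0 < R)
    (f : EuclideanSpace ℝ (Fin n) → ℝ) (hcont : Continuous f) (hfint : Integrable f)
    (fhat : EuclideanSpace ℝ (Fin n) → ℂ)
    (hfhat : fhat = FourierTransform.fourier (fun x => (f x : ℂ)))
    (hsmooth : ∀ ω, ‖fhat ω‖ * (1 + ‖ω‖ ^ k) ≤ ρ)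
    (Z : ℝ) (hZ : Z = ∫ ω, ‖fhat ω‖ * ‖(2 * π) • ω‖ ^ 2) (hZpos : 0 < Z)
    (p : EuclideanSpace ℝ (Fin n) → ℝ) (hp : p = fun ω => ‖fhat ω‖ * ‖(2 * π) • ω‖ ^ 2 / Z)
    (q : Metric.sphere (0 : EuclideanSpace ℝ (Fin n)) 1 → ℝ)
    (hq : q = fun α => ∫ r in Set.Ioi (0:ℝ), p (r • Subtype.val α) * r ^ (n - 1)) :
    ∃ (h : Metric.sphere (0 : EuclideanSpace ℝ (Fin n)) 1 → ℝ → ℝ)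
      (a : EuclideanSpace ℝ (Fin n)) (b : ℝ),
      (∀ α t, t ∈ Set.Icc (-R) R → |h α t * q α| ≤ 8 * π ^ 2 * ρ) ∧
      ∀ x : EuclideanSpace ℝ (Fin n), ‖x‖ ≤ R →
        f x = (∫ α, (∫ t in (-R)..R,
                h α t * max 0 (⟪(α : EuclideanSpace ℝ (Fin n)), x⟫ - t)) * q α
              ∂(volume : Measure (EuclideanSpace ℝ (Fin n))).toSphere)
            + ⟪a, x⟫ + b :=
  relu_integral_representation_smooth_general n k hn hk ρ R f hcont hfint fhat hfhat hsmooth Z hZpos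
    p hp q hq
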